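/- Let n ≥ 1 and let R_1, …, R_{n+1} be exchangeable real-valued random variables such that P(R_i = R_j) = 0 for all i ≠ j. Define the conformal p-value π = (1 + #{i ∈ {1,…,n} : R_i ≥ R_{n+1}})/(n+1). Then for every α ∈ (0,1), P(π > α) ≤ 1 − α + 1/(n+1). -/

import Mathlib

/-!
Let `C` be the number of scores among `R_1, …, R_n` that are at least `R_{n+1}`, so that
`π = (1 + C)/(n+1)`. On the almost sure event that the scores are distinct, the counts
`C_i = #{j ≠ i : R_j ≥ R_i}` are a permutation of `0, …, n`, so exactly `n + 1 - m` of them are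
at least `m`. Exchangeability gives all events `{C_i ≥ m}` the same probability, and summing over
`i` yields `P(C ≥ m) = (n + 1 - m)/(n + 1)`. Since `π > α` forces `C ≥ ⌊α (n+1)⌋`, the bound follows.
-/

open MeasureTheory Filter Set

/-- A finite family of random elements is exchangeable if its joint distribution is
invariant under permutations of the indices. -/
def Exchangeable {Ω E : Type*} [MeasurableSpace Ω] [MeasurableSpace E]
    (μ : Measure Ω) {k : ℕ} (V : Fin k → Ω → E) : Prop :=
  ∀ σ : Equiv.Perm (Fin k),
    Measure.map (fun ω (i : Fin k) => V (σ i) ω) μ =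
      Measure.map (fun ω (i : Fin k) => V i ω) μ

open scoped ENNReal

section CountGE

variable {ι α : Type*} [Fintype ι] [DecidableEq ι] [LinearOrder α]

open Finset in
def countGE (x : ι → α) (i : ι) : ℕ := #{j | j ≠ i ∧ x i ≤ x j}

lemma countGE_lt_card (x : ι → α) (i : ι) : countGE x i < Fintype.card ι :=
  Finset.card_lt_univ_of_notMem (x := i) (by simp)

lemma countGE_lt_countGE_of_lt {x : ι → α} {i j : ι} (h : x i < x j) :
    countGE x j < countGE x i := by
  refine Finset.card_lt_card ⟨fun k hk => ?_, fun hsub => ?_⟩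
  · simp only [Finset.mem_filter, Finset.mem_univ, true_and] at hk ⊢
    exact ⟨by rintro rfl; exact hk.2.not_gt h, h.le.trans hk.2⟩
  · simpa using hsub (by simp [ne_of_apply_ne x h.ne', h.le] : j ∈ _)

lemma countGE_injective {x : ι → α} (hx : Function.Injective x) :
    Function.Injective (countGE x) := by
  intro i j hij
  rcases lt_trichotomy (x i) (x j) with h | h | h
  · exact absurd hij (countGE_lt_countGE_of_lt h).ne'
  · exact hx h
  · exact absurd hij (countGE_lt_countGE_of_lt h).ne

lemma image_countGE {x : ι → α} (hx : Function.Injective x) :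
    Finset.univ.image (countGE x) = Finset.range (Fintype.card ι) :=
  Finset.eq_of_subset_of_card_le
    (fun k hk => by
      obtain ⟨i, -, rfl⟩ := Finset.mem_image.mp hk
      exact Finset.mem_range.mpr (countGE_lt_card x i))
    (by rw [Finset.card_image_of_injective _ (countGE_injective hx), Finset.card_range,
      Finset.card_univ])

open Finset in
lemma card_le_countGE {x : ι → α} (hx : Function.Injective x) (m : ℕ) :
    #{i | m ≤ countGE x i} = Fintype.card ι - m := by
  rw [← card_image_of_injective _ (countGE_injective hx), ← filter_image, image_countGE hx,
    ← Nat.card_Ico m, range_eq_Ico]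
  congr 1
  ext k
  simp [and_comm]

lemma countGE_comp_equiv (x : ι → α) (σ : ι ≃ ι) (i : ι) :
    countGE (fun j => x (σ j)) i = countGE x (σ i) :=
  Finset.card_equiv σ fun j => by simp

variable [TopologicalSpace α] [MeasurableSpace α] [OpensMeasurableSpace α]
  [OrderClosedTopology α] [SecondCountableTopology α]

lemma measurable_countGE (i : ι) : Measurable fun x : ι → α => countGE x i := by
  simp_rw [countGE, Finset.card_filter]
  refine Finset.measurable_sum _ fun j _ => Measurable.ite ?_ measurable_const measurable_const
  exact (MeasurableSet.const _).inter
    (measurableSet_le (measurable_pi_apply i) (measurable_pi_apply j))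

end CountGE

lemma countGE_last {α : Type*} [LinearOrder α] {n : ℕ} (x : Fin (n + 1) → α) :
    countGE x (Fin.last n) = Nat.card {i : Fin n // x (Fin.last n) ≤ x i.castSucc} := by
  rw [Nat.card_eq_fintype_card, Fintype.card_subtype, countGE, Finset.card_filter,
    Finset.card_filter, Fin.sum_univ_castSucc]
  simp [Fin.castSucc_ne_last]

section Probability

variable {Ω : Type*} [MeasurableSpace Ω] {μ : Measure Ω}

lemma sum_measure_eq_of_ae_ncard_eq [IsProbabilityMeasure μ] {ι : Type*} [Fintype ι]
    {s : ι → Set Ω} (hs : ∀ i, MeasurableSet (s i)) {c : ℕ}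
    (h : ∀ᵐ ω ∂μ, {i | ω ∈ s i}.ncard = c) :
    ∑ i, μ (s i) = c := by
  classical
  calc ∑ i, μ (s i) = ∫⁻ ω, ∑ i, (s i).indicator 1 ω ∂μ := by
        rw [lintegral_finsetSum _ fun i _ => measurable_one.indicator (hs i)]
        simp only [lintegral_indicator_one (hs _)]
    _ = ∫⁻ _, (c : ℝ≥0∞) ∂μ := lintegral_congr_ae <| h.mono fun ω hω => by
        simp [Set.indicator_apply, Finset.sum_boole, ← hω, Set.ncard_eq_toFinset_card']
    _ = c := by simp

lemma ae_injective_of_measure_eq_zero {ι E : Type*} [Countable ι] {V : ι → Ω → E}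
    (h : ∀ i j, i ≠ j → μ {ω | V i ω = V j ω} = 0) :
    ∀ᵐ ω ∂μ, Function.Injective fun i => V i ω := by
  have h' : ∀ i j, ∀ᵐ ω ∂μ, V i ω = V j ω → i = j := fun i j => by
    by_cases hij : i = j
    · exact Eventually.of_forall fun _ _ => hij
    · exact (measure_eq_zero_iff_ae_notMem.mp (h i j hij)).mono fun ω hω heq => absurd heq hω
  filter_upwards [ae_all_iff.mpr fun i => ae_all_iff.mpr (h' i)] with ω hω i j using hω i j

lemma Exchangeable.measure_comp_perm_mem {E : Type*} [MeasurableSpace E] {k : ℕ}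
    {V : Fin k → Ω → E} (hV : Exchangeable μ V) (hVm : ∀ i, Measurable (V i))
    (σ : Equiv.Perm (Fin k)) {S : Set (Fin k → E)} (hS : MeasurableSet S) :
    μ {ω | (fun i => V (σ i) ω) ∈ S} = μ {ω | (fun i => V i ω) ∈ S} := by
  have h := congrArg (· S) (hV σ)
  rwa [Measure.map_apply (measurable_pi_lambda _ fun i => hVm (σ i)) hS,
    Measure.map_apply (measurable_pi_lambda _ hVm) hS] at h

variable {α : Type*} [LinearOrder α] [TopologicalSpace α] [MeasurableSpace α]
  [OpensMeasurableSpace α] [OrderClosedTopology α] [SecondCountableTopology α]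

lemma Exchangeable.measure_le_countGE [IsProbabilityMeasure μ] {k : ℕ} {V : Fin k → Ω → α}
    (hV : Exchangeable μ V) (hVm : ∀ i, Measurable (V i))
    (hinj : ∀ᵐ ω ∂μ, Function.Injective fun i => V i ω) (m : ℕ) (i : Fin k) :
    μ {ω | m ≤ countGE (fun j => V j ω) i} = ((k - m : ℕ) : ℝ≥0∞) / k := by
  have hS : ∀ j, MeasurableSet {x : Fin k → α | m ≤ countGE x j} := fun j =>
    measurable_countGE j measurableSet_Ici
  have hE : ∀ j, MeasurableSet {ω | m ≤ countGE (fun l => V l ω) j} := fun j =>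
    measurable_pi_lambda _ hVm (hS j)
  have heq : ∀ j, μ {ω | m ≤ countGE (fun l => V l ω) j} =
      μ {ω | m ≤ countGE (fun l => V l ω) i} := fun j => by
    refine Eq.trans ?_ (hV.measure_comp_perm_mem hVm (Equiv.swap j i) (hS i))
    congr 1
    ext ω
    rw [mem_ofPred_eq, mem_ofPred_eq, mem_ofPred_eq, countGE_comp_equiv (fun l => V l ω),
      Equiv.swap_apply_right]
  have hsum := sum_measure_eq_of_ae_ncard_eq hE (hinj.mono fun ω hω => by
    simpa [Set.ncard_eq_toFinset_card'] using card_le_countGE hω m)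
  simp only [heq, Finset.sum_const, Finset.card_univ, Fintype.card_fin, nsmul_eq_mul] at hsum
  rwa [ENNReal.eq_div_iff (by simpa using i.pos.ne') (by simp)]

end Probability

lemma natCast_sub_floor_div_le {α : ℝ} (hα : α ∈ Icc 0 1) {N : ℕ} (hN : 0 < N) :
    ((N - ⌊α * N⌋₊ : ℕ) : ℝ≥0∞) / N ≤ ENNReal.ofReal (1 - α + 1 / N) := by
  have hN' : (0 : ℝ) < N := Nat.cast_pos.mpr hN
  rw [← ENNReal.ofReal_natCast, ← ENNReal.ofReal_natCast, ← ENNReal.ofReal_div_of_pos hN']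
  refine ENNReal.ofReal_le_ofReal ?_
  rw [div_le_iff₀ hN', Nat.cast_sub (Nat.floor_le_of_le (by nlinarith [hα.2]))]
  have hfloor := Nat.lt_floor_add_one (α * N)
  rw [add_mul, one_div_mul_cancel hN'.ne']
  linarith

theorem conformal_pvalue_upper_bound_general
    {Ω : Type*} [MeasurableSpace Ω] (μ : Measure Ω) [IsProbabilityMeasure μ]
    (n : ℕ)
    (R : Fin (n + 1) → Ω → ℝ)
    (hRmeas : ∀ i, Measurable (R i))
    (hexch : Exchangeable μ R)
    (hties : ∀ i j : Fin (n + 1), i ≠ j → μ {ω | R i ω = R j ω} = 0)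
    (π : Ω → ℝ)
    (hπ : ∀ ω, π ω =
      (1 + (Nat.card {i : Fin n // R (Fin.last n) ω ≤ R i.castSucc ω} : ℝ)) / (n + 1))
    (α : ℝ) (hα : α ∈ Set.Ioo (0 : ℝ) 1) :
    μ {ω | α < π ω} ≤ ENNReal.ofReal (1 - α + 1 / (n + 1)) := by
  set m := ⌊α * (n + 1)⌋₊
  have hsub : {ω | α < π ω} ⊆ {ω | m ≤ countGE (fun i => R i ω) (Fin.last n)} := fun ω hω => by
    rw [mem_ofPred_eq, hπ, ← countGE_last (fun i => R i ω), lt_div_iff₀ (by positivity)] at hω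
    have hfloor : m < countGE (fun i => R i ω) (Fin.last n) + 1 :=
      (Nat.floor_lt' (Nat.add_one_ne_zero _)).mpr (by push_cast; linarith)
    exact Nat.lt_add_one_iff.mp hfloor
  calc μ {ω | α < π ω}
      ≤ μ {ω | m ≤ countGE (fun i => R i ω) (Fin.last n)} := measure_mono hsub
    _ = ((n + 1 - m : ℕ) : ℝ≥0∞) / (n + 1 : ℕ) :=
        hexch.measure_le_countGE hRmeas (ae_injective_of_measure_eq_zero hties) m _
    _ ≤ ENNReal.ofReal (1 - α + 1 / (n + 1)) := by
        simpa using natCast_sub_floor_div_le (Ioo_subset_Icc_self hα) n.succ_pos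

/-- For exchangeable and almost-surely tie-free scores `R_1, …, R_{n+1}`,
the conformal p-value `π = (1 + #{i ≤ n : R_i ≥ R_{n+1}})/(n+1)` satisfies
`P(π > α) ≤ 1 - α + 1/(n+1)` for every `α ∈ (0,1)`. -/
theorem conformal_pvalue_upper_bound
    {Ω : Type*} [MeasurableSpace Ω] (μ : Measure Ω) [IsProbabilityMeasure μ]
    (n : ℕ) (hn : 1 ≤ n)
    (R : Fin (n + 1) → Ω → ℝ)
    (hRmeas : ∀ i, Measurable (R i))
    (hexch : Exchangeable μ R)
    (hties : ∀ i j : Fin (n + 1), i ≠ j → μ {ω | R i ω = R j ω} = 0)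
    (π : Ω → ℝ)
    (hπ : ∀ ω, π ω =
      (1 + (Nat.card {i : Fin n // R (Fin.last n) ω ≤ R i.castSucc ω} : ℝ)) / (n + 1))
    (α : ℝ) (hα : α ∈ Set.Ioo (0 : ℝ) 1) :
    μ {ω | α < π ω} ≤ ENNReal.ofReal (1 - α + 1 / (n + 1)) :=
  conformal_pvalue_upper_bound_general μ n R hRmeas hexch hties π hπ α hα
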